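/- arXiv:1310.4907 — 2 statements merged into one kernel-verified Lean document; each statement's English description precedes it below -/
import Mathlib

section
/- Let G be a finite connected simple graph with at least 3 vertices. Then the minimum, over all spanning trees T of G, of the number of internal vertices of T equals γ_c(G), the minimum size of a connected dominating set of G. -/
/-- `D` is a connected dominating set of the simple graph `G`. -/
def IsConnectedDominatingSet {V : Type*} (G : SimpleGraph V) (D : Set V) : Prop :=
  (∀ v : V, v ∈ D ∨ ∃ u ∈ D, G.Adj v u) ∧ (G.induce D).Connected

/-- `γ_c(G)`: the minimum size of a connected dominating set of `G`. -/
noncomputable def connectedDominationNumber {V : Type*} (G : SimpleGraph V) : ℕ :=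
  sInf {n : ℕ | ∃ D : Set V, IsConnectedDominatingSet G D ∧ D.ncard = n}

open SimpleGraph Set

section Aux

variable {V : Type*}

/-- Two distinct elements of a finite set force its cardinality to be at least 2. -/
lemma aux_pair_le_ncard {s : Set V} (hs : s.Finite) {a b : V} (ha : a ∈ s) (hb : b ∈ s)
    (hab : a ≠ b) : 2 ≤ s.ncard := by
  have h1 : ({a, b} : Set V) ⊆ s := by
    intro x hx; rcases hx with rfl | hx
    · exact ha
    · simp only [Set.mem_singleton_iff] at hx; exact hx ▸ hb
  calc 2 = ({a, b} : Set V).ncard := (Set.ncard_pair hab).symm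
    _ ≤ s.ncard := Set.ncard_le_ncard h1 hs

/-- A walk starting in a "closed pair" `{v, u}` stays inside it. -/
lemma aux_stuck {T : SimpleGraph V} {v u : V}
    (hv : ∀ x, T.Adj v x → x = u) (hu : ∀ x, T.Adj u x → x = v) :
    ∀ {a b : V}, T.Walk a b → (a = v ∨ a = u) → (b = v ∨ b = u) := by
  intro a b p
  induction p with
  | nil => exact id
  | cons h q ih =>
    intro ha
    apply ih
    rcases ha with rfl | rfl
    · right; exact hv _ h
    · left; exact hu _ h

/-- Deleting a non-bridge edge preserves reachability. -/
lemma aux_reach_del {G : SimpleGraph V} {v w : V}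
    (hvw : (G \ fromEdgeSet {s(v, w)}).Reachable v w) :
    ∀ {a b : V}, G.Walk a b → (G \ fromEdgeSet {s(v, w)}).Reachable a b := by
  intro a b p
  induction p with
  | nil => exact Reachable.refl _
  | @cons a c b h q ih =>
    refine Reachable.trans ?_ ih
    by_cases he : s(a, c) = s(v, w)
    · rw [Sym2.eq_iff] at he
      rcases he with ⟨rfl, rfl⟩ | ⟨rfl, rfl⟩
      · exact hvw
      · exact hvw.symm
    · refine Adj.reachable ?_
      rw [sdiff_adj, fromEdgeSet_adj]
      exact ⟨h, by tauto⟩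

/-- Every connected graph on a finite vertex type has a spanning tree. -/
lemma aux_exists_tree_le [Fintype V] :
    ∀ (n : ℕ) (H : SimpleGraph V), H.edgeSet.ncard = n → H.Connected →
      ∃ T, T ≤ H ∧ T.IsTree := by
  intro n
  induction n using Nat.strong_induction_on with
  | _ n ih =>
    intro H hn hH
    by_cases hac : H.IsAcyclic
    · exact ⟨H, le_rfl, ⟨hH, hac⟩⟩
    · rw [IsAcyclic] at hac
      push_neg at hac
      obtain ⟨v, c, hc⟩ := hac
      have hlen := hc.three_le_length
      have hne : c.edges ≠ [] := by
        intro h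
        have := c.length_edges
        rw [h] at this
        simp at this
        omega
      obtain ⟨e, he⟩ := List.exists_mem_of_ne_nil _ hne
      induction e using Sym2.ind with
      | _ a b =>
        have hiff := (adj_and_reachable_delete_edges_iff_exists_cycle (G := H) (v := a)
          (w := b)).2 ⟨v, c, hc, he⟩
        have hadj : H.Adj a b := hiff.1
        have hre := hiff.2
        have hH' : (H \ fromEdgeSet {s(a, b)}).Connected := by
          haveI := hH.nonempty
          refine Connected.mk fun x y => ?_
          obtain ⟨p⟩ := hH.preconnected x y
          exact aux_reach_del hre p
        have hssub : (H \ fromEdgeSet {s(a, b)}).edgeSet ⊂ H.edgeSet := by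
          constructor
          · exact edgeSet_mono sdiff_le
          · intro hsub
            have h1 : s(a, b) ∈ H.edgeSet := hadj
            have h2 := hsub h1
            rw [mem_edgeSet, sdiff_adj, fromEdgeSet_adj] at h2
            exact h2.2 ⟨rfl, hadj.ne⟩
        have hlt : (H \ fromEdgeSet {s(a, b)}).edgeSet.ncard < n := by
          rw [← hn]
          exact Set.ncard_lt_ncard hssub (Set.toFinite _)
        obtain ⟨T, hT1, hT2⟩ := ih _ hlt _ rfl hH'
        exact ⟨T, hT1.trans sdiff_le, hT2⟩

/-- The middle vertex of a path with a further vertex ahead is internal. -/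
lemma aux_mid_mem [Fintype V] {T : SimpleGraph V} {a c b : V} (h : T.Adj a c) (q : T.Walk c b)
    (hsup : a ∉ q.support) (hb : b ∈ {v : V | 2 ≤ (T.neighborSet v).ncard}) :
    c ∈ {v : V | 2 ≤ (T.neighborSet v).ncard} := by
  cases q with
  | nil => exact hb
  | @cons _ d _ h' q' =>
    have hd : d ∈ (Walk.cons h' q').support := by
      rw [Walk.support_cons]
      exact List.mem_cons_of_mem _ q'.start_mem_support
    have had : a ≠ d := fun hh => hsup (hh ▸ hd)
    exact aux_pair_le_ncard (Set.toFinite _) h.symm h' had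

/-- A path between internal vertices of `T ≤ G` yields reachability inside the set of
internal vertices. -/
lemma aux_reach_internal [Fintype V] {T G : SimpleGraph V} (hTG : T ≤ G) :
    ∀ {a b : V} (p : T.Walk a b), p.IsPath →
      ∀ (ha : a ∈ {v : V | 2 ≤ (T.neighborSet v).ncard})
        (hb : b ∈ {v : V | 2 ≤ (T.neighborSet v).ncard}),
      (G.induce {v : V | 2 ≤ (T.neighborSet v).ncard}).Reachable ⟨a, ha⟩ ⟨b, hb⟩ := by
  intro a b p
  induction p with
  | nil => intro _ ha hb; exact Reachable.refl _
  | @cons a c b h q ih =>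
    intro hp ha hb
    rw [Walk.cons_isPath_iff] at hp
    have hc := aux_mid_mem h q hp.2 hb
    refine Reachable.trans (Adj.reachable ?_) (ih hp.1 hc hb)
    exact hTG h

/-- The internal vertices of a spanning tree form a connected dominating set. -/
lemma aux_internal_isCDS [Fintype V] {T G : SimpleGraph V} (hTG : T ≤ G) (hT : T.IsTree)
    (hcard : 3 ≤ Fintype.card V) :
    (∀ v : V, v ∈ {v : V | 2 ≤ (T.neighborSet v).ncard} ∨
      ∃ u ∈ {v : V | 2 ≤ (T.neighborSet v).ncard}, G.Adj v u) ∧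
    (G.induce {v : V | 2 ≤ (T.neighborSet v).ncard}).Connected := by
  classical
  set D := {v : V | 2 ≤ (T.neighborSet v).ncard} with hD
  have hnt : Nontrivial V := Fintype.one_lt_card_iff_nontrivial.mp (by omega)
  have hdom : ∀ v : V, v ∈ D ∨ ∃ u ∈ D, G.Adj v u := by
    intro v
    by_cases hv : v ∈ D
    · exact Or.inl hv
    · obtain ⟨w, hw⟩ := exists_ne v
      obtain ⟨p⟩ := hT.isConnected.preconnected v w
      obtain ⟨u, hu⟩ : ∃ u, T.Adj v u := by
        cases p with
        | nil => exact absurd rfl hw.symm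
        | cons h q => exact ⟨_, h⟩
      by_cases hu2 : u ∈ D
      · exact Or.inr ⟨u, hu2, hTG hu⟩
      · exfalso
        have hv1 : ∀ x, T.Adj v x → x = u := by
          intro x hx
          by_contra hne
          exact hv (aux_pair_le_ncard (Set.toFinite _) hx hu hne)
        have hu1 : ∀ x, T.Adj u x → x = v := by
          intro x hx
          by_contra hne
          exact hu2 (aux_pair_le_ncard (Set.toFinite _) hx hu.symm hne)
        have h2 : ({v, u} : Finset V).card ≤ 2 := by
          have := Finset.card_insert_le v ({u} : Finset V)
          simpa using this
        have hcompl : (({v, u} : Finset V)ᶜ).Nonempty := by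
          rw [← Finset.card_pos, Finset.card_compl]
          omega
        obtain ⟨x, hx⟩ := hcompl
        simp only [Finset.mem_compl, Finset.mem_insert, Finset.mem_singleton] at hx
        push_neg at hx
        obtain ⟨p'⟩ := hT.isConnected.preconnected v x
        rcases aux_stuck hv1 hu1 p' (Or.inl rfl) with rfl | rfl
        · exact hx.1 rfl
        · exact hx.2 rfl
  refine ⟨hdom, ?_⟩
  have hDne : Nonempty ↥D := by
    obtain ⟨v⟩ := hnt.to_nonempty
    rcases hdom v with hv | ⟨u, hu, _⟩
    · exact ⟨⟨v, hv⟩⟩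
    · exact ⟨⟨u, hu⟩⟩
  refine Connected.mk fun x y => ?_
  obtain ⟨p⟩ := hT.isConnected.preconnected x.1 y.1
  have := aux_reach_internal hTG p.toPath.1 p.toPath.2 x.2 y.2
  simpa using this

/-- From a connected dominating set one can build a spanning tree whose internal vertices
all lie in the dominating set. -/
lemma aux_exists_tree_internal_subset [Fintype V] {G : SimpleGraph V} {D : Set V}
    (hnV : Nonempty V)
    (hdom : ∀ v : V, v ∈ D ∨ ∃ u ∈ D, G.Adj v u)
    (hconn : (G.induce D).Connected) :
    ∃ T, T ≤ G ∧ T.IsTree ∧ {v : V | 2 ≤ (T.neighborSet v).ncard} ⊆ D := by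
  classical
  have hchoice : ∀ v : V, ∃ u, u ∈ D ∧ (v ∉ D → G.Adj v u) := by
    intro v
    by_cases hv : v ∈ D
    · exact ⟨v, hv, fun h => absurd hv h⟩
    · obtain h | ⟨u, hu, hadj⟩ := hdom v
      · exact absurd h hv
      · exact ⟨u, hu, fun _ => hadj⟩
  choose g hg1 hg2 using hchoice
  let H : SimpleGraph V :=
    { Adj := fun a b => G.Adj a b ∧ ((a ∈ D ∧ b ∈ D) ∨ (a ∉ D ∧ b = g a) ∨ (b ∉ D ∧ a = g b)),
      symm := ⟨by rintro a b ⟨h1, h2⟩; exact ⟨h1.symm, by tauto⟩⟩,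
      loopless := ⟨fun a h => G.loopless.irrefl a h.1⟩ }
  have hHG : H ≤ G := fun {a b} h => h.1
  have hDne : D.Nonempty := by
    obtain ⟨v⟩ := hnV
    rcases hdom v with hv | ⟨u, hu, _⟩
    · exact ⟨v, hv⟩
    · exact ⟨u, hu⟩
  obtain ⟨d0, hd0⟩ := hDne
  let φ : G.induce D →g H := ⟨Subtype.val, fun {x y} hxy => ⟨hxy, Or.inl ⟨x.2, y.2⟩⟩⟩
  have hDreach : ∀ x ∈ D, H.Reachable x d0 := by
    intro x hx
    exact (hconn.preconnected ⟨x, hx⟩ ⟨d0, hd0⟩).map φ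
  have hHconn : H.Connected := by
    have : Nonempty V := hnV
    refine Connected.mk fun a b => ?_
    have hall : ∀ v, H.Reachable v d0 := by
      intro v
      by_cases hv : v ∈ D
      · exact hDreach v hv
      · have hadj : H.Adj v (g v) := ⟨hg2 v hv, Or.inr (Or.inl ⟨hv, rfl⟩)⟩
        exact hadj.reachable.trans (hDreach _ (hg1 v))
    exact (hall a).trans (hall b).symm
  obtain ⟨T, hTH, hTt⟩ := aux_exists_tree_le _ H rfl hHconn
  refine ⟨T, hTH.trans hHG, hTt, ?_⟩
  intro v hv
  by_contra hvD
  have hsub : T.neighborSet v ⊆ {g v} := by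
    intro x hx
    have hH2 : H.Adj v x := hTH hx
    rcases hH2.2 with ⟨h1, _⟩ | ⟨_, rfl⟩ | ⟨hx2, heq⟩
    · exact absurd h1 hvD
    · exact Set.mem_singleton _
    · exact absurd (show v ∈ D by rw [heq]; exact hg1 x) hvD
  have hle := Set.ncard_le_ncard hsub (Set.finite_singleton _)
  rw [Set.ncard_singleton] at hle
  have : 2 ≤ (T.neighborSet v).ncard := hv
  omega

end Aux

/-- For a connected graph on at least 3 vertices, the minimum number of internal
vertices over all spanning trees equals the connected domination number `γ_c(G)`. -/
theorem min_internal_vertices_eq_connectedDominationNumber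
    {V : Type*} [Fintype V] (G : SimpleGraph V)
    (hG : G.Connected) (hcard : 3 ≤ Fintype.card V) :
    sInf {n : ℕ | ∃ T : SimpleGraph V, T ≤ G ∧ T.IsTree ∧
        {v : V | 2 ≤ (T.neighborSet v).ncard}.ncard = n} =
      connectedDominationNumber G := by
  classical
  have hnV : Nonempty V := Fintype.card_pos_iff.mp (by omega)
  have huniv : IsConnectedDominatingSet G Set.univ := by
    refine ⟨fun v => Or.inl trivial, ?_⟩
    have f := (induceUnivIso G).symm
    exact hG.map f.toHom f.toEquiv.surjective
  have hrhs_ne : {n : ℕ | ∃ D : Set V, IsConnectedDominatingSet G D ∧ D.ncard = n}.Nonempty :=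
    ⟨_, Set.univ, huniv, rfl⟩
  have hlhs_ne : {n : ℕ | ∃ T : SimpleGraph V, T ≤ G ∧ T.IsTree ∧
      {v : V | 2 ≤ (T.neighborSet v).ncard}.ncard = n}.Nonempty := by
    obtain ⟨T, hT1, hT2⟩ := aux_exists_tree_le _ G rfl hG
    exact ⟨_, T, hT1, hT2, rfl⟩
  apply le_antisymm
  · obtain ⟨D, hD, hDcard⟩ := Nat.sInf_mem hrhs_ne
    obtain ⟨T, hTG, hTt, hTsub⟩ := aux_exists_tree_internal_subset hnV hD.1 hD.2
    calc sInf {n : ℕ | ∃ T : SimpleGraph V, T ≤ G ∧ T.IsTree ∧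
          {v : V | 2 ≤ (T.neighborSet v).ncard}.ncard = n}
        ≤ {v : V | 2 ≤ (T.neighborSet v).ncard}.ncard := Nat.sInf_le ⟨T, hTG, hTt, rfl⟩
      _ ≤ D.ncard := Set.ncard_le_ncard hTsub (Set.toFinite _)
      _ = connectedDominationNumber G := hDcard
  · obtain ⟨T, hTG, hTt, hTcard⟩ := Nat.sInf_mem hlhs_ne
    have h := aux_internal_isCDS hTG hTt hcard
    exact Nat.sInf_le ⟨_, ⟨h.1, h.2⟩, hTcard⟩
end

section
/- Let U be a nonempty finite set, let ι be a nonempty finite index set, and let F : ι → Finset U be a family of subsets with ⋃_{i∈ι} F(i) = U. Define the simple graph G on the vertex set {s} ⊔ ι ⊔ U by: s is adjacent to every i ∈ ι, and i ∈ ι is adjacent to u ∈ U if and only if u ∈ F(i) (no other edges). Then G is connected, and for every natural number l, the following are equivalent: (1) G has a spanning tree T such that the set consisting of the internal vertices of T together with s has cardinality at most l + 1; (2) there exists a subset J ⊆ ι with |J| ≤ l and ⋃_{i∈J} F(i) = U. -/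
/-- The graph of the SET-COVER reduction, on the vertex set `{s} ⊔ ι ⊔ U`
(the source `s`, a vertex per set, a vertex per element): the source is adjacent
to every set-vertex `i`, and the set-vertex `i` is adjacent to the element-vertex
`u` iff `u ∈ F i`; there are no other edges. -/
def coverGraph (ι U : Type*) (F : ι → Finset U) : SimpleGraph (Unit ⊕ ι ⊕ U) :=
  SimpleGraph.fromRel (fun a b =>
    match a, b with
    | Sum.inl _, Sum.inr (Sum.inl _) => True
    | Sum.inr (Sum.inl i), Sum.inr (Sum.inr u) => u ∈ F i
    | _, _ => False)

open SimpleGraph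

private lemma reach_iff_of_inv {V : Type*} {G : SimpleGraph V} (P : V → Prop)
    (h : ∀ a b, G.Adj a b → (P a ↔ P b)) {u v : V} (hr : G.Reachable u v) : P u ↔ P v := by
  obtain ⟨w⟩ := hr
  induction w with
  | nil => exact Iff.rfl
  | cons h' p ih => exact (h _ _ h').trans ih

private lemma connected_of_hub {ι U : Type*} [Nonempty ι] (H : SimpleGraph (Unit ⊕ ι ⊕ U))
    (h1 : ∀ i : ι, H.Adj (Sum.inl ()) (Sum.inr (Sum.inl i)))
    (h2 : ∀ u : U, ∃ i : ι, H.Adj (Sum.inr (Sum.inl i)) (Sum.inr (Sum.inr u))) :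
    H.Connected := by
  rw [connected_iff]
  refine ⟨?_, inferInstance⟩
  have key : ∀ v, H.Reachable (Sum.inl ()) v := by
    rintro (⟨⟩ | i | u)
    · exact Reachable.refl _
    · exact (h1 i).reachable
    · obtain ⟨i, hi⟩ := h2 u
      exact ((h1 i).reachable).trans hi.reachable
  intro a b
  exact (key a).symm.trans (key b)

/-- The spanning tree constructed from a cover choice function: the source is joined to
every set-vertex, and each element-vertex `u` is joined to the set-vertex `c u`. -/
private def coverTree {ι U : Type*} (c : U → ι) : SimpleGraph (Unit ⊕ ι ⊕ U) :=
  SimpleGraph.fromRel (fun a b =>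
    match a, b with
    | Sum.inl _, Sum.inr (Sum.inl _) => True
    | Sum.inr (Sum.inl i), Sum.inr (Sum.inr u) => c u = i
    | _, _ => False)

private lemma coverTree_isTree {ι U : Type*} [Nonempty ι] (c : U → ι) :
    (coverTree (U := U) c).IsTree := by
  constructor
  · apply connected_of_hub
    · intro i; simp [coverTree, fromRel_adj]
    · intro u; exact ⟨c u, by simp [coverTree, fromRel_adj]⟩
  · rw [isAcyclic_iff_forall_adj_isBridge]
    rintro v w h
    rw [isBridge_iff]
    refine fun hreach => ?_
    rcases v with ⟨⟩ | i | u <;> rcases w with ⟨⟩ | j | u' <;>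
        simp only [coverTree, fromRel_adj] at h
    · simp at h
    · -- s -- vi j
      have := reach_iff_of_inv (G := coverTree c \ fromEdgeSet {s(Sum.inl (), Sum.inr (Sum.inl j))})
        (fun x => match x with
          | Sum.inl _ => False
          | Sum.inr (Sum.inl j') => j' = j
          | Sum.inr (Sum.inr u) => c u = j) ?_ hreach
      · simp at this
      · rintro (⟨⟩ | a | a) (⟨⟩ | b | b) h' <;>
          simp [sdiff_adj, fromEdgeSet_adj, coverTree, fromRel_adj] at h' ⊢ <;> aesop
    · simp at h
    · -- vi i -- s
      have := reach_iff_of_inv (G := coverTree c \ fromEdgeSet {s(Sum.inr (Sum.inl i), Sum.inl ())})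
        (fun x => match x with
          | Sum.inl _ => False
          | Sum.inr (Sum.inl j') => j' = i
          | Sum.inr (Sum.inr u) => c u = i) ?_ hreach
      · simp at this
      · rintro (⟨⟩ | a | a) (⟨⟩ | b | b) h' <;>
          simp [sdiff_adj, fromEdgeSet_adj, coverTree, fromRel_adj] at h' ⊢ <;> aesop
    · simp at h
    · -- vi i -- vu u'
      have := reach_iff_of_inv
        (G := coverTree c \ fromEdgeSet {s(Sum.inr (Sum.inl i), Sum.inr (Sum.inr u'))})
        (fun x => x = Sum.inr (Sum.inr u')) ?_ hreach
      · simp at this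
      · rintro (⟨⟩ | a | a) (⟨⟩ | b | b) h' <;>
          simp [sdiff_adj, fromEdgeSet_adj, coverTree, fromRel_adj] at h' ⊢ <;> aesop
    · simp at h
    · -- vu u -- vi j
      have := reach_iff_of_inv
        (G := coverTree c \ fromEdgeSet {s(Sum.inr (Sum.inr u), Sum.inr (Sum.inl j))})
        (fun x => x = Sum.inr (Sum.inr u)) ?_ hreach
      · simp at this
      · rintro (⟨⟩ | a | a) (⟨⟩ | b | b) h' <;>
          simp [sdiff_adj, fromEdgeSet_adj, coverTree, fromRel_adj] at h' ⊢ <;> aesop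
    · simp at h

private lemma coverTree_le {ι U : Type*} (F : ι → Finset U) (c : U → ι)
    (hc : ∀ u, u ∈ F (c u)) :
    coverTree c ≤ coverGraph ι U F := by
  rintro (⟨⟩ | a | a) (⟨⟩ | b | b) h <;>
    simp_all [coverTree, coverGraph, fromRel_adj] <;> aesop

private lemma coverTree_internal {ι U : Type*} [Fintype ι] [Fintype U] (c : U → ι) (J : Finset ι)
    (hc : ∀ u, c u ∈ J) :
    ({v : Unit ⊕ ι ⊕ U | 2 ≤ ((coverTree c).neighborSet v).ncard} ∪ {Sum.inl ()}) ⊆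
      insert (Sum.inl ()) ((fun i => (Sum.inr (Sum.inl i) : Unit ⊕ ι ⊕ U)) '' ↑J) := by
  rintro v (hv | rfl)
  · simp only [Set.mem_setOf_eq] at hv
    rcases v with ⟨⟩ | i | u
    · exact Set.mem_insert _ _
    · obtain ⟨a, ha, b, hb, hab⟩ := (Set.one_lt_ncard (Set.toFinite _)).mp hv
      have key : ∀ x, x ∈ (coverTree c).neighborSet (Sum.inr (Sum.inl i)) →
          x = Sum.inl () ∨ ∃ u, c u = i ∧ x = Sum.inr (Sum.inr u) := by
        rintro (⟨⟩ | j | u) hx <;> simp_all [coverTree, fromRel_adj, mem_neighborSet]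
      have : ∃ u, c u = i := by
        rcases key a ha with rfl | ⟨u, hu, rfl⟩
        · rcases key b hb with rfl | ⟨u, hu, rfl⟩
          · exact absurd rfl hab
          · exact ⟨u, hu⟩
        · exact ⟨u, hu⟩
      obtain ⟨u, rfl⟩ := this
      exact Set.mem_insert_iff.mpr (Or.inr ⟨c u, hc u, rfl⟩)
    · exfalso
      have hsub : (coverTree c).neighborSet (Sum.inr (Sum.inr u)) ⊆
          {Sum.inr (Sum.inl (c u))} := by
        rintro (⟨⟩ | j | u') hx <;> simp_all [coverTree, fromRel_adj, mem_neighborSet]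
      have := Set.ncard_le_ncard hsub (Set.toFinite _)
      rw [Set.ncard_singleton] at this
      omega
  · exact Set.mem_insert _ _

private lemma forward_cover {ι U : Type*} [Fintype ι] [Fintype U] (F : ι → Finset U)
    (T : SimpleGraph (Unit ⊕ ι ⊕ U)) (hTG : T ≤ coverGraph ι U F) (hT : T.IsTree) (u : U) :
    ∃ i, u ∈ F i ∧ 2 ≤ (T.neighborSet (Sum.inr (Sum.inl i))).ncard := by
  obtain ⟨p, hp, -⟩ := hT.existsUnique_path (Sum.inr (Sum.inr u)) (Sum.inl ())
  cases p with
  | cons h₁ q =>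
    rename_i x
    have hx : ∃ i, x = Sum.inr (Sum.inl i) ∧ u ∈ F i := by
      have h' := hTG h₁
      rcases x with ⟨⟩ | i | v <;> simp [coverGraph, fromRel_adj] at h'
      exact ⟨_, rfl, h'⟩
    obtain ⟨i, rfl, hFi⟩ := hx
    cases q with
    | cons h₂ r =>
      rename_i y
      have hnodup := hp.support_nodup
      rw [Walk.support_cons, Walk.support_cons] at hnodup
      have hne : (Sum.inr (Sum.inr u) : Unit ⊕ ι ⊕ U) ≠ y := by
        rcases List.nodup_cons.mp hnodup with ⟨hnm, -⟩
        intro h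
        exact hnm (by rw [h]; exact List.mem_cons_of_mem _ r.start_mem_support)
      exact ⟨i, hFi, (Set.one_lt_ncard (Set.toFinite _)).mpr
        ⟨Sum.inr (Sum.inr u), h₁.symm, y, h₂, hne⟩⟩

/-- Correctness of the SET-COVER reduction: the reduction graph is connected, and
it has a spanning tree whose internal vertices together with the source number at
most `l + 1` iff there is a subfamily of at most `l` sets covering `U`. -/
theorem coverGraph_connected_and_broadcast_iff_setCover
    {ι U : Type*} [Fintype ι] [Fintype U] [Nonempty ι] [Nonempty U]
    (F : ι → Finset U) (hF : ∀ u : U, ∃ i : ι, u ∈ F i) :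
    (coverGraph ι U F).Connected ∧
      ∀ l : ℕ,
        (∃ T : SimpleGraph (Unit ⊕ ι ⊕ U), T ≤ coverGraph ι U F ∧ T.IsTree ∧
            ({v : Unit ⊕ ι ⊕ U | 2 ≤ (T.neighborSet v).ncard} ∪
              {Sum.inl ()}).ncard ≤ l + 1) ↔
          (∃ J : Finset ι, J.card ≤ l ∧ ∀ u : U, ∃ i ∈ J, u ∈ F i) := by
  classical
  have hinj : Function.Injective (fun i : ι => (Sum.inr (Sum.inl i) : Unit ⊕ ι ⊕ U)) :=
    fun a b h => by simpa using h
  constructor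
  · apply connected_of_hub
    · intro i; simp [coverGraph, fromRel_adj]
    · intro u
      obtain ⟨i, hi⟩ := hF u
      exact ⟨i, by simp [coverGraph, fromRel_adj, hi]⟩
  · intro l
    constructor
    · rintro ⟨T, hTG, hTree, hcard⟩
      set J : Finset ι :=
        Finset.univ.filter (fun i => 2 ≤ (T.neighborSet (Sum.inr (Sum.inl i))).ncard) with hJdef
      refine ⟨J, ?_, ?_⟩
      · have hsub : insert (Sum.inl ()) ((fun i => (Sum.inr (Sum.inl i) : Unit ⊕ ι ⊕ U)) '' ↑J) ⊆
            ({v : Unit ⊕ ι ⊕ U | 2 ≤ (T.neighborSet v).ncard} ∪ {Sum.inl ()}) := by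
          intro v hv
          rcases Set.mem_insert_iff.mp hv with rfl | ⟨i, hi, rfl⟩
          · exact Or.inr rfl
          · left
            have := (Finset.mem_filter.mp (Finset.mem_coe.mp hi)).2
            exact this
        have h1 : J.card + 1 ≤ l + 1 := by
          calc J.card + 1
              = (insert (Sum.inl ())
                  ((fun i => (Sum.inr (Sum.inl i) : Unit ⊕ ι ⊕ U)) '' ↑J)).ncard := by
                rw [Set.ncard_insert_of_notMem (by simp) (Set.toFinite _),
                  Set.ncard_image_of_injective _ hinj, Set.ncard_coe_finset]
            _ ≤ _ := Set.ncard_le_ncard hsub (Set.toFinite _)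
            _ ≤ l + 1 := hcard
        omega
      · intro u
        obtain ⟨i, hFi, hdeg⟩ := forward_cover F T hTG hTree u
        exact ⟨i, Finset.mem_filter.mpr ⟨Finset.mem_univ _, hdeg⟩, hFi⟩
    · rintro ⟨J, hJl, hJc⟩
      choose c hcJ hcF using hJc
      refine ⟨coverTree c, coverTree_le F c hcF, coverTree_isTree c, ?_⟩
      refine (Set.ncard_le_ncard (coverTree_internal c J hcJ) (Set.toFinite _)).trans ?_
      calc (insert (Sum.inl ())
              ((fun i => (Sum.inr (Sum.inl i) : Unit ⊕ ι ⊕ U)) '' ↑J)).ncard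
          ≤ ((fun i => (Sum.inr (Sum.inl i) : Unit ⊕ ι ⊕ U)) '' ↑J).ncard + 1 :=
            Set.ncard_insert_le _ _
        _ = J.card + 1 := by
            rw [Set.ncard_image_of_injective _ hinj, Set.ncard_coe_finset]
        _ ≤ l + 1 := by omega
end
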